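/- arXiv:0811.1969 — 3 statements merged into one kernel-verified Lean document; each statement's English description precedes it below -/
import Mathlib

section
/- Let T : V → W be a linear map between finite-dimensional complex inner product spaces, and for t ≥ 1 let e_t denote the orthogonal projection onto the graph of tT. Then as t → ∞, e_t converges in operator norm to the block projection [[P_ker T, 0], [0, 1 − P_ker T*]], where P_ker T and P_ker T* are orthogonal projections onto ker T and ker T*. -/
variable {V W : Type*}
  [NormedAddCommGroup V] [InnerProductSpace ℂ V] [FiniteDimensional ℂ V]
  [NormedAddCommGroup W] [InnerProductSpace ℂ W] [FiniteDimensional ℂ W]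

/-- The graph projection of `T`, as a linear map on `V × W`, given by the block matrix
`[[(1+T*T)⁻¹, T*(1+TT*)⁻¹], [T(1+T*T)⁻¹, 1-(1+TT*)⁻¹]]`. -/
noncomputable def gproj (T : V →ₗ[ℂ] W) : (V × W) →ₗ[ℂ] (V × W) :=
  let A : V →ₗ[ℂ] V := Ring.inverse ((1 : Module.End ℂ V) + LinearMap.adjoint T ∘ₗ T)
  let C : W →ₗ[ℂ] W := Ring.inverse ((1 : Module.End ℂ W) + T ∘ₗ LinearMap.adjoint T)
  LinearMap.prod
    ((A ∘ₗ LinearMap.fst ℂ V W) + ((LinearMap.adjoint T ∘ₗ C) ∘ₗ LinearMap.snd ℂ V W))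
    (((T ∘ₗ A) ∘ₗ LinearMap.fst ℂ V W) + ((LinearMap.id - C) ∘ₗ LinearMap.snd ℂ V W))

/-- The orthogonal projection onto the kernel of `T`, as a linear endomorphism of `V`. -/
noncomputable def kerProj (T : V →ₗ[ℂ] W) : V →ₗ[ℂ] V :=
  (LinearMap.ker T).subtype ∘ₗ (Submodule.orthogonalProjection (LinearMap.ker T)).toLinearMap

/-!
Write `A = (1 + S*S)⁻¹` for `S = tT` and `P` for the projection onto `ker T = ker S`. In finite
dimension `T` is bounded below on `(ker T)ᗮ`, say `‖Tz‖ ≥ c‖z‖`, so `S` is bounded below there by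
`tc`. The vector `w = Ax - Px` lies in `(ker T)ᗮ` and `(1 + S*S) w = x - Px`, so
`‖w‖² + ‖Sw‖² = re ⟪x - Px, w⟫ ≤ ‖x‖ ‖w‖`, which gives `‖w‖ ≤ ‖x‖ / (tc)²` and
`‖S(Ax)‖ = ‖Sw‖ ≤ ‖x‖ / (tc)`.
The same estimates for `S*` control the second column of the block matrix, so `e_t` converges
to the limit at rate `O(1/t)`.
-/

open LinearMap Submodule Filter Topology
open scoped InnerProductSpace

section
variable {𝕜 E F : Type*} [RCLike 𝕜]
  [NormedAddCommGroup E] [InnerProductSpace 𝕜 E]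
  [NormedAddCommGroup F] [InnerProductSpace 𝕜 F]

theorem mul_norm_le_norm_smul_apply_of_mem_orthogonal_ker (T : E →ₗ[𝕜] F) {c : ℝ} {a : 𝕜}
    (ha : a ≠ 0) (hT : ∀ z ∈ (ker T)ᗮ, c * ‖z‖ ≤ ‖T z‖) :
    ∀ z ∈ (ker (a • T))ᗮ, ‖a‖ * c * ‖z‖ ≤ ‖(a • T) z‖ := by
  rw [ker_smul _ _ ha]
  intro z hz
  rw [LinearMap.smul_apply, norm_smul, mul_assoc]
  exact mul_le_mul_of_nonneg_left (hT z hz) (norm_nonneg a)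

theorem norm_sub_starProjection_le (K : Submodule 𝕜 E) [K.HasOrthogonalProjection] (x : E) :
    ‖x - K.starProjection x‖ ≤ ‖x‖ := by
  have h : x - K.starProjection x = Kᗮ.starProjection x := by
    rw [starProjection_orthogonal]
    rfl
  rw [h]
  exact Kᗮ.norm_starProjection_apply_le x

variable [FiniteDimensional 𝕜 E]

theorem exists_pos_mul_norm_le_norm_apply_of_mem_orthogonal_ker (T : E →ₗ[𝕜] F) :
    ∃ c > 0, ∀ z ∈ (ker T)ᗮ, c * ‖z‖ ≤ ‖T z‖ := by
  have hker : ker (T ∘ₗ (ker T)ᗮ.subtype) = ⊥ := by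
    rw [ker_eq_bot']
    intro z hz
    exact Subtype.ext <| (ker T).orthogonal_disjoint.le_bot ⟨hz, z.2⟩
  obtain ⟨K, hK, hanti⟩ := (T ∘ₗ (ker T)ᗮ.subtype).exists_antilipschitzWith hker
  refine ⟨K⁻¹, by positivity, fun z hz => ?_⟩
  rw [inv_mul_le_iff₀ (by positivity)]
  exact ZeroHomClass.bound_of_antilipschitz _ hanti ⟨z, hz⟩

variable [FiniteDimensional 𝕜 F]

theorem exists_pos_mul_norm_le_norm_apply_and_adjoint_apply (T : E →ₗ[𝕜] F) :
    ∃ c > 0, (∀ z ∈ (ker T)ᗮ, c * ‖z‖ ≤ ‖T z‖) ∧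
      ∀ z ∈ (ker (adjoint T))ᗮ, c * ‖z‖ ≤ ‖adjoint T z‖ := by
  obtain ⟨c₁, hc₁, hT⟩ := exists_pos_mul_norm_le_norm_apply_of_mem_orthogonal_ker T
  obtain ⟨c₂, hc₂, hT'⟩ := exists_pos_mul_norm_le_norm_apply_of_mem_orthogonal_ker (adjoint T)
  refine ⟨min c₁ c₂, lt_min hc₁ hc₂, fun z hz => ?_, fun z hz => ?_⟩
  · exact (mul_le_mul_of_nonneg_right (min_le_left _ _) (norm_nonneg z)).trans (hT z hz)
  · exact (mul_le_mul_of_nonneg_right (min_le_right _ _) (norm_nonneg z)).trans (hT' z hz)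

theorem re_inner_one_add_adjoint_comp_self_apply_self (T : E →ₗ[𝕜] F) (z : E) :
    RCLike.re ⟪(1 + adjoint T ∘ₗ T) z, z⟫_𝕜 = ‖z‖ ^ 2 + ‖T z‖ ^ 2 := by
  simp [inner_add_left, adjoint_inner_left]

theorem inner_one_add_adjoint_comp_self_apply_of_mem_ker (T : E →ₗ[𝕜] F) {k : E}
    (hk : k ∈ ker T) (z : E) : ⟪k, (1 + adjoint T ∘ₗ T) z⟫_𝕜 = ⟪k, z⟫_𝕜 := by
  simp [inner_add_right, adjoint_inner_right, mem_ker.mp hk]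

theorem isUnit_one_add_adjoint_comp_self (T : E →ₗ[𝕜] F) :
    IsUnit (1 + adjoint T ∘ₗ T : Module.End 𝕜 E) := by
  have hinj : Function.Injective (1 + adjoint T ∘ₗ T : Module.End 𝕜 E) := by
    rw [← ker_eq_bot, ker_eq_bot']
    intro z hz
    have := re_inner_one_add_adjoint_comp_self_apply_self T z
    rw [hz, inner_zero_left, map_zero] at this
    exact norm_eq_zero.mp (by nlinarith [norm_nonneg z, sq_nonneg ‖T z‖])
  exact (Module.End.isUnit_iff _).mpr ⟨hinj, injective_iff_surjective.mp hinj⟩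

theorem one_add_adjoint_comp_self_apply_of_mem_ker (T : E →ₗ[𝕜] F) {k : E} (hk : k ∈ ker T) :
    (1 + adjoint T ∘ₗ T) k = k := by
  simp [mem_ker.mp hk]

noncomputable def gramResolvent (T : E →ₗ[𝕜] F) : Module.End 𝕜 E :=
  Ring.inverse (1 + adjoint T ∘ₗ T)

theorem one_add_adjoint_comp_self_apply_gramResolvent (T : E →ₗ[𝕜] F) (x : E) :
    (1 + adjoint T ∘ₗ T) (gramResolvent T x) = x :=
  DFunLike.congr_fun (Ring.mul_inverse_cancel _ (isUnit_one_add_adjoint_comp_self T)) x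

theorem one_add_adjoint_comp_self_apply_gramResolvent_sub_starProjection (T : E →ₗ[𝕜] F)
    (x : E) :
    (1 + adjoint T ∘ₗ T) (gramResolvent T x - (ker T).starProjection x) =
      x - (ker T).starProjection x := by
  rw [map_sub, one_add_adjoint_comp_self_apply_gramResolvent,
    one_add_adjoint_comp_self_apply_of_mem_ker T ((ker T).starProjection_apply_mem x)]

theorem gramResolvent_sub_starProjection_mem_orthogonal (T : E →ₗ[𝕜] F) (x : E) :
    gramResolvent T x - (ker T).starProjection x ∈ (ker T)ᗮ := by
  rw [mem_orthogonal]
  intro k hk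
  rw [← inner_one_add_adjoint_comp_self_apply_of_mem_ker T hk,
    one_add_adjoint_comp_self_apply_gramResolvent_sub_starProjection]
  exact (mem_orthogonal _ _).mp ((ker T).sub_starProjection_mem_orthogonal x) k hk

theorem norm_sq_add_norm_apply_sq_le (T : E →ₗ[𝕜] F) (z : E) :
    ‖z‖ ^ 2 + ‖T z‖ ^ 2 ≤ ‖(1 + adjoint T ∘ₗ T) z‖ * ‖z‖ := by
  rw [← re_inner_one_add_adjoint_comp_self_apply_self]
  exact re_inner_le_norm _ _

theorem sq_mul_norm_le_norm_one_add_adjoint_comp_self_apply (T : E →ₗ[𝕜] F) {c : ℝ}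
    (hc : 0 ≤ c) (hT : ∀ z ∈ (ker T)ᗮ, c * ‖z‖ ≤ ‖T z‖) {z : E} (hz : z ∈ (ker T)ᗮ) :
    c ^ 2 * ‖z‖ ≤ ‖(1 + adjoint T ∘ₗ T) z‖ := by
  rcases (norm_nonneg z).eq_or_lt with hz0 | hzpos
  · rw [← hz0, mul_zero]
    exact norm_nonneg _
  have hsq : (c * ‖z‖) ^ 2 ≤ ‖T z‖ ^ 2 := pow_le_pow_left₀ (by positivity) (hT z hz) 2
  refine le_of_mul_le_mul_right ?_ hzpos
  nlinarith [norm_sq_add_norm_apply_sq_le T z]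

theorem mul_norm_apply_le_norm_one_add_adjoint_comp_self_apply (T : E →ₗ[𝕜] F) {c : ℝ}
    (hc : 0 ≤ c) (hT : ∀ z ∈ (ker T)ᗮ, c * ‖z‖ ≤ ‖T z‖) {z : E} (hz : z ∈ (ker T)ᗮ) :
    c * ‖T z‖ ≤ ‖(1 + adjoint T ∘ₗ T) z‖ := by
  have h := sq_mul_norm_le_norm_one_add_adjoint_comp_self_apply T hc hT hz
  refine (pow_le_pow_iff_left₀ (by positivity) (norm_nonneg _) two_ne_zero).mp ?_
  calc (c * ‖T z‖) ^ 2 = c ^ 2 * ‖T z‖ ^ 2 := by ring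
    _ ≤ c ^ 2 * (‖(1 + adjoint T ∘ₗ T) z‖ * ‖z‖) := by
      gcongr
      linarith [norm_sq_add_norm_apply_sq_le T z, sq_nonneg ‖z‖]
    _ = ‖(1 + adjoint T ∘ₗ T) z‖ * (c ^ 2 * ‖z‖) := by ring
    _ ≤ ‖(1 + adjoint T ∘ₗ T) z‖ * ‖(1 + adjoint T ∘ₗ T) z‖ :=
      mul_le_mul_of_nonneg_left h (norm_nonneg _)
    _ = ‖(1 + adjoint T ∘ₗ T) z‖ ^ 2 := (sq _).symm

theorem sq_mul_norm_gramResolvent_sub_starProjection_le (T : E →ₗ[𝕜] F) {c : ℝ} (hc : 0 ≤ c)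
    (hT : ∀ z ∈ (ker T)ᗮ, c * ‖z‖ ≤ ‖T z‖) (x : E) :
    c ^ 2 * ‖gramResolvent T x - (ker T).starProjection x‖ ≤ ‖x‖ :=
  calc _ ≤ ‖(1 + adjoint T ∘ₗ T) (gramResolvent T x - (ker T).starProjection x)‖ :=
        sq_mul_norm_le_norm_one_add_adjoint_comp_self_apply T hc hT
          (gramResolvent_sub_starProjection_mem_orthogonal T x)
    _ ≤ ‖x‖ := by
      rw [one_add_adjoint_comp_self_apply_gramResolvent_sub_starProjection]
      exact norm_sub_starProjection_le _ x

theorem mul_norm_apply_gramResolvent_le (T : E →ₗ[𝕜] F) {c : ℝ} (hc : 0 ≤ c)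
    (hT : ∀ z ∈ (ker T)ᗮ, c * ‖z‖ ≤ ‖T z‖) (x : E) :
    c * ‖T (gramResolvent T x)‖ ≤ ‖x‖ := by
  have hPx : T ((ker T).starProjection x) = 0 := mem_ker.mp ((ker T).starProjection_apply_mem x)
  calc c * ‖T (gramResolvent T x)‖
      = c * ‖T (gramResolvent T x - (ker T).starProjection x)‖ := by rw [map_sub, hPx, sub_zero]
    _ ≤ ‖(1 + adjoint T ∘ₗ T) (gramResolvent T x - (ker T).starProjection x)‖ :=
        mul_norm_apply_le_norm_one_add_adjoint_comp_self_apply T hc hT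
          (gramResolvent_sub_starProjection_mem_orthogonal T x)
    _ ≤ ‖x‖ := by
      rw [one_add_adjoint_comp_self_apply_gramResolvent_sub_starProjection]
      exact norm_sub_starProjection_le _ x

end

theorem ContinuousLinearMap.tendsto_of_eventually_norm_sub_apply_le {ι 𝕜 E F : Type*}
    [NontriviallyNormedField 𝕜] [SeminormedAddCommGroup E] [NormedSpace 𝕜 E]
    [SeminormedAddCommGroup F] [NormedSpace 𝕜 F] {l : Filter ι} {f : ι → E →L[𝕜] F}
    {g : E →L[𝕜] F} {ε : ι → ℝ} (hε : Tendsto ε l (𝓝 0))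
    (h : ∀ᶠ i in l, 0 ≤ ε i ∧ ∀ x, ‖f i x - g x‖ ≤ ε i * ‖x‖) : Tendsto f l (𝓝 g) := by
  refine tendsto_iff_norm_sub_tendsto_zero.mpr <|
    squeeze_zero' (Eventually.of_forall fun i => norm_nonneg _) ?_ hε
  filter_upwards [h] with i ⟨hε0, hi⟩
  exact (f i - g).opNorm_le_bound hε0 hi

noncomputable def kernelBlockProj (T : V →ₗ[ℂ] W) : (V × W) →ₗ[ℂ] (V × W) :=
  LinearMap.prod (kerProj T ∘ₗ LinearMap.fst ℂ V W)
    ((LinearMap.id - kerProj (LinearMap.adjoint T)) ∘ₗ LinearMap.snd ℂ V W)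

theorem adjoint_ofReal_smul (T : V →ₗ[ℂ] W) (t : ℝ) :
    adjoint ((t : ℂ) • T) = (t : ℂ) • adjoint T := by
  rw [map_smulₛₗ, Complex.conj_ofReal]

set_option linter.unusedSectionVars false in
theorem kerProj_smul (T : V →ₗ[ℂ] W) {a : ℂ} (ha : a ≠ 0) : kerProj (a • T) = kerProj T := by
  have key : ∀ K : Submodule ℂ V, K = ker T → ∀ [K.HasOrthogonalProjection],
      K.subtype ∘ₗ (K.orthogonalProjectionOnto : V →ₗ[ℂ] K) = kerProj T := by
    rintro K rfl _
    rfl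
  exact key _ (ker_smul T a ha)

theorem kernelBlockProj_ofReal_smul (T : V →ₗ[ℂ] W) {t : ℝ} (ht : t ≠ 0) :
    kernelBlockProj ((t : ℂ) • T) = kernelBlockProj T := by
  have ht' : (t : ℂ) ≠ 0 := Complex.ofReal_ne_zero.mpr ht
  rw [kernelBlockProj, kernelBlockProj, kerProj_smul T ht', adjoint_ofReal_smul,
    kerProj_smul _ ht']

theorem gproj_apply (S : V →ₗ[ℂ] W) (p : V × W) :
    gproj S p = (gramResolvent S p.1 + adjoint S (gramResolvent (adjoint S) p.2),
      S (gramResolvent S p.1) + (p.2 - gramResolvent (adjoint S) p.2)) := by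
  have hC : gramResolvent (adjoint S) = Ring.inverse (1 + S ∘ₗ adjoint S) := by
    rw [gramResolvent, adjoint_adjoint]
  rw [hC]
  rfl

theorem kernelBlockProj_apply (S : V →ₗ[ℂ] W) (p : V × W) :
    kernelBlockProj S p =
      ((ker S).starProjection p.1, p.2 - (ker (adjoint S)).starProjection p.2) :=
  rfl

theorem norm_gproj_sub_kernelBlockProj_apply_le (S : V →ₗ[ℂ] W) {c : ℝ} (hc : 1 ≤ c)
    (hS : ∀ z ∈ (ker S)ᗮ, c * ‖z‖ ≤ ‖S z‖)
    (hS' : ∀ z ∈ (ker (adjoint S))ᗮ, c * ‖z‖ ≤ ‖adjoint S z‖) (p : V × W) :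
    ‖gproj S p - kernelBlockProj S p‖ ≤ 2 / c * ‖p‖ := by
  obtain ⟨x, y⟩ := p
  have hc0 : 0 ≤ c := zero_le_one.trans hc
  have hcc : c ≤ c ^ 2 := by nlinarith
  have h11 : c * ‖gramResolvent S x - (ker S).starProjection x‖ ≤ ‖x‖ :=
    (mul_le_mul_of_nonneg_right hcc (norm_nonneg _)).trans
      (sq_mul_norm_gramResolvent_sub_starProjection_le S hc0 hS x)
  have h21 : c * ‖S (gramResolvent S x)‖ ≤ ‖x‖ := mul_norm_apply_gramResolvent_le S hc0 hS x
  have h12 : c * ‖adjoint S (gramResolvent (adjoint S) y)‖ ≤ ‖y‖ :=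
    mul_norm_apply_gramResolvent_le _ hc0 hS' y
  have h22 : c * ‖gramResolvent (adjoint S) y - (ker (adjoint S)).starProjection y‖ ≤ ‖y‖ :=
    (mul_le_mul_of_nonneg_right hcc (norm_nonneg _)).trans
      (sq_mul_norm_gramResolvent_sub_starProjection_le _ hc0 hS' y)
  have hsum : ∀ a b : ℝ, c * a ≤ ‖x‖ → c * b ≤ ‖y‖ → a + b ≤ 2 / c * ‖(x, y)‖ := by
    intro a b ha hb
    rw [div_mul_eq_mul_div, le_div_iff₀ (zero_lt_one.trans_le hc)]
    linarith [norm_fst_le (x, y), norm_snd_le (x, y)]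
  rw [gproj_apply, kernelBlockProj_apply, Prod.mk_sub_mk, Prod.norm_mk]
  refine max_le ?_ ?_
  · calc _ = ‖(gramResolvent S x - (ker S).starProjection x) +
          adjoint S (gramResolvent (adjoint S) y)‖ := by congr 1; abel
      _ ≤ _ := (norm_add_le _ _).trans (hsum _ _ h11 h12)
  · calc _ = ‖S (gramResolvent S x) -
          (gramResolvent (adjoint S) y - (ker (adjoint S)).starProjection y)‖ := by congr 1; abel
      _ ≤ _ := (norm_sub_le _ _).trans (hsum _ _ h21 h22)

/-- As `t → ∞`, the graph projections of `tT` converge in operator norm to the block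
projection `[[P_ker T, 0], [0, 1 − P_ker T*]]`. -/
theorem graph_projection_tendsto_kernel_projection (T : V →ₗ[ℂ] W) :
    Filter.Tendsto
      (fun t : ℝ => LinearMap.toContinuousLinearMap (gproj ((t : ℂ) • T)))
      Filter.atTop
      (nhds (LinearMap.toContinuousLinearMap (LinearMap.prod
        (kerProj T ∘ₗ LinearMap.fst ℂ V W)
        ((LinearMap.id - kerProj (LinearMap.adjoint T)) ∘ₗ LinearMap.snd ℂ V W)))) := by
  obtain ⟨c, hc, hT, hT'⟩ := exists_pos_mul_norm_le_norm_apply_and_adjoint_apply T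
  refine ContinuousLinearMap.tendsto_of_eventually_norm_sub_apply_le
    (ε := fun t => 2 / (t * c)) ?_ ?_
  · exact tendsto_const_nhds.div_atTop (tendsto_id.atTop_mul_const hc)
  filter_upwards [eventually_ge_atTop c⁻¹, eventually_gt_atTop 0] with t htc ht
  have htc1 : 1 ≤ t * c := (inv_le_iff_one_le_mul₀ hc).mp htc
  have ht' : (t : ℂ) ≠ 0 := Complex.ofReal_ne_zero.mpr ht.ne'
  have hnorm : ‖(t : ℂ)‖ = t := Complex.norm_of_nonneg ht.le
  have hS := mul_norm_le_norm_smul_apply_of_mem_orthogonal_ker T ht' hT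
  have hS' := mul_norm_le_norm_smul_apply_of_mem_orthogonal_ker (adjoint T) ht' hT'
  rw [hnorm] at hS hS'
  rw [← adjoint_ofReal_smul] at hS'
  refine ⟨by positivity, fun p => ?_⟩
  change ‖gproj _ p - kernelBlockProj T p‖ ≤ _
  rw [← kernelBlockProj_ofReal_smul T ht.ne']
  exact norm_gproj_sub_kernelBlockProj_apply_le _ htc1 hS hS' p
end

section
/- Let σ : ℝⁿ → M_m(ℂ) be continuous, homogeneous of degree d > 0 for the anisotropic dilations, and invertible away from 0. Then the matrix-valued functions (1+σ*σ)⁻¹, σ(1+σ*σ)⁻¹, (1+σσ*)⁻¹, and σ*(1+σσ*)⁻¹ all tend to 0 in norm as ρ(ξ) → ∞; i.e., they are C₀ (vanishing at infinity) functions on ℝⁿ. -/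
/-!
With the homogeneous gauge `ρ (x, y) = max ‖x‖ √‖y‖` one has `ρ (δ_t ξ) = t ρ ξ`. Writing
`ξ = δ_{ρ ξ} η` with `ρ η = 1`, homogeneity gives `σ(ξ)⁻¹ = ρ(ξ)^(-d) σ(η)⁻¹`, and `σ⁻¹` is bounded
on the compact set `{ρ = 1}`, so `‖σ(ξ)⁻¹‖ = O(ρ(ξ)^(-d)) → 0`. For an invertible operator `T`, the
identity `‖w‖² + ‖T w‖² = Re ⟪(1 + T*T) w, w⟫` together with `‖w‖ ≤ ‖T⁻¹‖ ‖T w‖` gives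
`‖(1 + T*T)⁻¹‖ ≤ ‖T⁻¹‖²` and `‖T (1 + T*T)⁻¹‖ ≤ ‖T⁻¹‖`. Apply this to `σ` and to `σ*`.
-/

open Filter Topology ContinuousLinearMap

lemma Ring.inverse_smul {𝕜 R : Type*} [Field 𝕜] [Ring R] [Algebra 𝕜 R] {c : 𝕜} (hc : c ≠ 0)
    (a : R) : Ring.inverse (c • a) = c⁻¹ • Ring.inverse a := by
  have hc' : Ring.inverse (algebraMap 𝕜 R c) = algebraMap 𝕜 R c⁻¹ := by
    simpa using Ring.inverse_unit ((Units.mk0 c hc).map (algebraMap 𝕜 R).toMonoidHom)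
  rw [Algebra.smul_def, Ring.inverse_mul (.inl (hc.isUnit.map (algebraMap 𝕜 R))), hc',
    Algebra.smul_def, Algebra.commutes]

section HomogeneousGauge

variable {E F : Type*} [NormedAddCommGroup E] [NormedAddCommGroup F]

def dilation [NormedSpace ℝ E] [NormedSpace ℝ F] (t : ℝ) (ξ : E × F) : E × F :=
  (t • ξ.1, t ^ 2 • ξ.2)

noncomputable def homGauge (ξ : E × F) : ℝ := max ‖ξ.1‖ √‖ξ.2‖

section Dilation
variable [NormedSpace ℝ E] [NormedSpace ℝ F]

lemma dilation_one (ξ : E × F) : dilation 1 ξ = ξ := by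
  simp [dilation]

lemma dilation_dilation (s t : ℝ) (ξ : E × F) :
    dilation s (dilation t ξ) = dilation (s * t) ξ := by
  simp [dilation, smul_smul, mul_pow]

lemma homGauge_dilation {t : ℝ} (ht : 0 ≤ t) (ξ : E × F) :
    homGauge (dilation t ξ) = t * homGauge ξ := by
  simp [homGauge, dilation, norm_smul, abs_of_nonneg ht, Real.sqrt_mul (sq_nonneg t),
    Real.sqrt_sq ht, mul_max_of_nonneg _ _ ht]

end Dilation

lemma homGauge_pos {ξ : E × F} (hξ : ξ ≠ 0) : 0 < homGauge ξ := by
  rw [homGauge, lt_max_iff, norm_pos_iff, Real.sqrt_pos, norm_pos_iff, ← not_and_or]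
  exact fun h => hξ (Prod.ext h.1 h.2)

lemma norm_le_homGauge_add_sq (ξ : E × F) : ‖ξ‖ ≤ homGauge ξ + homGauge ξ ^ 2 := by
  have h₁ : ‖ξ.1‖ ≤ homGauge ξ := le_max_left _ _
  have h₂ : ‖ξ.2‖ ≤ homGauge ξ ^ 2 := by
    calc ‖ξ.2‖ = √‖ξ.2‖ ^ 2 := (Real.sq_sqrt (norm_nonneg _)).symm
      _ ≤ homGauge ξ ^ 2 := by gcongr; exact le_max_right _ _
  rw [Prod.norm_def, max_le_iff]
  constructor <;> nlinarith [norm_nonneg ξ.1]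

@[fun_prop]
lemma continuous_homGauge : Continuous (homGauge : E × F → ℝ) := by
  unfold homGauge; fun_prop

lemma isCompact_homGauge_eq_one [ProperSpace E] [ProperSpace F] :
    IsCompact {ξ : E × F | homGauge ξ = 1} := by
  refine Metric.isCompact_of_isClosed_isBounded (isClosed_eq (by fun_prop) continuous_const) ?_
  refine (Metric.isBounded_closedBall (x := 0) (r := 2)).subset fun ξ (hξ : homGauge ξ = 1) => ?_
  have := norm_le_homGauge_add_sq ξ
  rw [hξ] at this
  rw [Metric.mem_closedBall, dist_zero_right]
  linarith

lemma tendsto_homGauge_cocompact [ProperSpace E] [ProperSpace F] :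
    Tendsto homGauge (cocompact (E × F)) atTop := by
  refine tendsto_atTop.2 fun b => ?_
  filter_upwards [tendsto_norm_cocompact_atTop.eventually_ge_atTop (|b| + b ^ 2)] with ξ hξ
  by_contra! h
  have h₀ : 0 ≤ homGauge ξ := (norm_nonneg _).trans (le_max_left _ _)
  nlinarith [norm_le_homGauge_add_sq ξ, le_abs_self b]

end HomogeneousGauge

lemma ContinuousOn.ringInverse {X R : Type*} [TopologicalSpace X] [NormedRing R]
    [CompleteSpace R] {f : X → R} {s : Set X} (hf : ContinuousOn f s) (hs : ∀ x ∈ s, IsUnit (f x)) :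
    ContinuousOn (fun x => Ring.inverse (f x)) s := by
  intro x hx
  obtain ⟨u, hu⟩ := hs x hx
  exact (hu ▸ NormedRing.inverse_continuousAt u).comp_continuousWithinAt (hf x hx)

section HomogeneousSymbol

variable {E F R : Type*} [NormedAddCommGroup E] [NormedSpace ℝ E] [ProperSpace E]
  [NormedAddCommGroup F] [NormedSpace ℝ F] [ProperSpace F]
  [NormedRing R] [NormedAlgebra ℂ R] [CompleteSpace R]
  {d : ℕ} {σ : E × F → R}

lemma exists_norm_inverse_le_div_homGauge_pow (hcont : Continuous σ)
    (hhom : ∀ t : ℝ, 0 < t → ∀ ξ, σ (dilation t ξ) = ((t : ℂ) ^ d) • σ ξ)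
    (hinv : ∀ ξ, ξ ≠ 0 → IsUnit (σ ξ)) :
    ∃ C, ∀ ξ, ξ ≠ 0 → ‖Ring.inverse (σ ξ)‖ ≤ C / homGauge ξ ^ d := by
  obtain ⟨C, hC⟩ := isCompact_homGauge_eq_one.exists_bound_of_continuousOn
    (hcont.continuousOn.ringInverse fun ξ hξ =>
      hinv ξ fun h => by simp [h, homGauge] at hξ)
  refine ⟨C, fun ξ hξ => ?_⟩
  set r := homGauge ξ
  have hr : 0 < r := homGauge_pos hξ
  set η := dilation r⁻¹ ξ
  have hη : homGauge η = 1 := by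
    rw [homGauge_dilation (inv_nonneg.2 hr.le), inv_mul_cancel₀ hr.ne']
  have hση : σ ξ = ((r : ℂ) ^ d) • σ η := by
    rw [← hhom r hr, dilation_dilation, mul_inv_cancel₀ hr.ne', dilation_one]
  rw [hση, Ring.inverse_smul (by exact_mod_cast (pow_pos hr d).ne'), norm_smul, norm_inv,
    norm_pow, Complex.norm_real, Real.norm_of_nonneg hr.le, inv_mul_eq_div]
  gcongr
  exact hC η hη

lemma tendsto_inverse_cocompact (hd : 0 < d) (hcont : Continuous σ)
    (hhom : ∀ t : ℝ, 0 < t → ∀ ξ, σ (dilation t ξ) = ((t : ℂ) ^ d) • σ ξ)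
    (hinv : ∀ ξ, ξ ≠ 0 → IsUnit (σ ξ)) :
    Tendsto (fun ξ => Ring.inverse (σ ξ)) (cocompact (E × F)) (𝓝 0) := by
  obtain ⟨C, hC⟩ := exists_norm_inverse_le_div_homGauge_pow hcont hhom hinv
  refine squeeze_zero_norm' ?_ ((tendsto_const_nhds (x := C)).div_atTop
    ((tendsto_pow_atTop hd.ne').comp tendsto_homGauge_cocompact))
  filter_upwards [isCompact_singleton.compl_mem_cocompact] with ξ hξ
  exact hC ξ hξ

end HomogeneousSymbol

lemma le_of_sq_le_mul {x a : ℝ} (ha : 0 ≤ a) (h : x ^ 2 ≤ a * x) : x ≤ a := by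
  nlinarith

lemma norm_le_norm_inverse_mul_norm_apply {𝕜 E : Type*} [NontriviallyNormedField 𝕜]
    [NormedAddCommGroup E] [NormedSpace 𝕜 E] {T : E →L[𝕜] E} (hT : IsUnit T) (v : E) :
    ‖v‖ ≤ ‖Ring.inverse T‖ * ‖T v‖ :=
  calc ‖v‖ = ‖Ring.inverse T (T v)‖ := by
        rw [← mul_apply_eq_comp, Ring.inverse_mul_cancel _ hT, one_apply_eq_self]
    _ ≤ ‖Ring.inverse T‖ * ‖T v‖ := le_opNorm _ _

section GraphEntries

variable {H : Type*} [NormedAddCommGroup H] [InnerProductSpace ℂ H] [CompleteSpace H]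

open scoped InnerProductSpace

lemma sq_norm_add_sq_norm_apply_le (T : H →L[ℂ] H) (w : H) :
    ‖w‖ ^ 2 + ‖T w‖ ^ 2 ≤ ‖(1 + adjoint T * T) w‖ * ‖w‖ := by
  calc ‖w‖ ^ 2 + ‖T w‖ ^ 2 = RCLike.re ⟪(1 + adjoint T * T) w, w⟫_ℂ := by
        rw [add_apply, one_apply_eq_self, mul_apply_eq_comp, inner_add_left, adjoint_inner_left,
          map_add, inner_self_eq_norm_sq, inner_self_eq_norm_sq]
    _ ≤ ‖(1 + adjoint T * T) w‖ * ‖w‖ := re_inner_le_norm _ _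

lemma isUnit_one_add_adjoint_mul_self (T : H →L[ℂ] H) : IsUnit (1 + adjoint T * T) := by
  rw [← star_eq_adjoint]
  exact (isStrictlyPositive_one.add_nonneg (star_mul_self_nonneg T)).isUnit

lemma norm_le_of_norm_le_mul_norm_apply {T : H →L[ℂ] H} {δ : ℝ} (hδ : 0 ≤ δ)
    (hT : ∀ v, ‖v‖ ≤ δ * ‖T v‖) (w : H) :
    ‖w‖ ≤ δ ^ 2 * ‖(1 + adjoint T * T) w‖ ∧ ‖T w‖ ≤ δ * ‖(1 + adjoint T * T) w‖ := by
  set a := ‖(1 + adjoint T * T) w‖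
  have h := sq_norm_add_sq_norm_apply_le T w
  have hw := hT w
  have ha : 0 ≤ a := norm_nonneg _
  constructor
  · refine le_of_sq_le_mul (by positivity) ?_
    calc ‖w‖ ^ 2 ≤ (δ * ‖T w‖) ^ 2 := pow_le_pow_left₀ (norm_nonneg w) hw 2
      _ = δ ^ 2 * ‖T w‖ ^ 2 := mul_pow _ _ _
      _ ≤ δ ^ 2 * (a * ‖w‖) := by gcongr; linarith [sq_nonneg ‖w‖]
      _ = δ ^ 2 * a * ‖w‖ := by ring
  · refine le_of_sq_le_mul (by positivity) ?_
    calc ‖T w‖ ^ 2 ≤ a * ‖w‖ := by linarith [sq_nonneg ‖w‖]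
      _ ≤ a * (δ * ‖T w‖) := by gcongr
      _ = δ * a * ‖T w‖ := by ring

lemma apply_inverse_one_add_adjoint_mul_self (T : H →L[ℂ] H) (u : H) :
    (1 + adjoint T * T) (Ring.inverse (1 + adjoint T * T) u) = u := by
  rw [← mul_apply_eq_comp, Ring.mul_inverse_cancel _ (isUnit_one_add_adjoint_mul_self T),
    one_apply_eq_self]

lemma norm_inverse_one_add_adjoint_mul_self_le {T : H →L[ℂ] H} (hT : IsUnit T) :
    ‖Ring.inverse (1 + adjoint T * T)‖ ≤ ‖Ring.inverse T‖ ^ 2 := by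
  refine opNorm_le_bound _ (by positivity) fun u => ?_
  simpa only [apply_inverse_one_add_adjoint_mul_self] using
    (norm_le_of_norm_le_mul_norm_apply (norm_nonneg _) (norm_le_norm_inverse_mul_norm_apply hT)
      (Ring.inverse (1 + adjoint T * T) u)).1

lemma norm_mul_inverse_one_add_adjoint_mul_self_le {T : H →L[ℂ] H} (hT : IsUnit T) :
    ‖T * Ring.inverse (1 + adjoint T * T)‖ ≤ ‖Ring.inverse T‖ := by
  refine opNorm_le_bound _ (norm_nonneg _) fun u => ?_
  simpa only [mul_apply_eq_comp, apply_inverse_one_add_adjoint_mul_self] using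
    (norm_le_of_norm_le_mul_norm_apply (norm_nonneg _) (norm_le_norm_inverse_mul_norm_apply hT)
      (Ring.inverse (1 + adjoint T * T) u)).2

lemma tendsto_graph_entries {α : Type*} {l : Filter α} {T : α → H →L[ℂ] H}
    (hunit : ∀ᶠ a in l, IsUnit (T a)) (hT : Tendsto (fun a => Ring.inverse (T a)) l (𝓝 0)) :
    Tendsto (fun a => Ring.inverse (1 + adjoint (T a) * T a)) l (𝓝 0) ∧
    Tendsto (fun a => T a * Ring.inverse (1 + adjoint (T a) * T a)) l (𝓝 0) :=
  ⟨squeeze_zero_norm' (hunit.mono fun _ => norm_inverse_one_add_adjoint_mul_self_le)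
      (by simpa using hT.norm.pow 2),
    squeeze_zero_norm' (hunit.mono fun _ => norm_mul_inverse_one_add_adjoint_mul_self_le)
      (by simpa using hT.norm)⟩

end GraphEntries

/-- For a continuous symbol `σ`, anisotropically homogeneous of degree `d > 0` and invertible
away from `0`, the functions `(1+σ*σ)⁻¹`, `σ(1+σ*σ)⁻¹`, `(1+σσ*)⁻¹` and `σ*(1+σσ*)⁻¹`
all vanish at infinity. -/
theorem symbol_graph_entries_zero_at_infty (p q m d : ℕ) (hd : 0 < d)
    (σ : EuclideanSpace ℝ (Fin p) × EuclideanSpace ℝ (Fin q) →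
      (EuclideanSpace ℂ (Fin m) →L[ℂ] EuclideanSpace ℂ (Fin m)))
    (hcont : Continuous σ)
    (hhom : ∀ t : ℝ, 0 < t → ∀ ξ, σ (t • ξ.1, t ^ 2 • ξ.2) = ((t : ℂ) ^ d) • σ ξ)
    (hinv : ∀ ξ, ξ ≠ 0 → IsUnit (σ ξ)) :
    Tendsto (fun ξ => Ring.inverse (1 + adjoint (σ ξ) * σ ξ))
      (cocompact _) (nhds 0) ∧
    Tendsto (fun ξ => σ ξ * Ring.inverse (1 + adjoint (σ ξ) * σ ξ))
      (cocompact _) (nhds 0) ∧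
    Tendsto (fun ξ => Ring.inverse (1 + σ ξ * adjoint (σ ξ)))
      (cocompact _) (nhds 0) ∧
    Tendsto (fun ξ => adjoint (σ ξ) * Ring.inverse (1 + σ ξ * adjoint (σ ξ)))
      (cocompact _) (nhds 0) := by
  have hσ := tendsto_inverse_cocompact hd hcont hhom hinv
  have hunit : ∀ᶠ ξ in cocompact _, IsUnit (σ ξ) := by
    filter_upwards [(isCompact_singleton (x := 0)).compl_mem_cocompact] with ξ hξ using hinv ξ hξ
  have hσ' : Tendsto (fun ξ => Ring.inverse (adjoint (σ ξ))) (cocompact _) (𝓝 0) := by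
    have h := (adjoint.continuous.tendsto 0).comp hσ
    simp only [Function.comp_def, map_zero] at h
    simpa only [← star_eq_adjoint, Ring.inverse_star] using h
  obtain ⟨h₁, h₂⟩ := tendsto_graph_entries hunit hσ
  obtain ⟨h₃, h₄⟩ := tendsto_graph_entries (T := fun ξ => adjoint (σ ξ))
    (hunit.mono fun _ => IsUnit.star) hσ'
  simp only [adjoint_adjoint] at h₃ h₄
  exact ⟨h₁, h₂, h₃, h₄⟩
end

section
/- Let P : H₁ → H₂ be a closed densely defined operator between Hilbert spaces such that (1+P*P)⁻¹ and (1+PP*)⁻¹ are both compact. Then P is Fredholm: ker P and ker P* are finite-dimensional and the range of P is closed. -/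
/-!
For `u ∈ dom P` and any `b`, `⟪u, b⟫ = ⟪u, R b⟫ + ⟪P u, P (R b)⟫`. Hence `R` is symmetric and
its fixed points are exactly `ker P`; since the fixed space of a compact operator is
finite-dimensional (Riesz), so is `ker P`, and likewise `ker P*` using `R'`. For the range,
`(1 - R') w = P (P* (R' w))` gives `range (1 - R') ⊆ range P ⊆ (ker P*)ᗮ = (ker (1 - R'))ᗮ`,
while the Fredholm alternative for the compact symmetric `R'` acting on `(ker (1 - R'))ᗮ` gives
`range (1 - R') = (ker (1 - R'))ᗮ`, a closed subspace.
-/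

open scoped InnerProductSpace

theorem ContinuousLinearMap.mem_ker_one_sub_iff {R M : Type*} [Ring R] [TopologicalSpace M]
    [AddCommGroup M] [IsTopologicalAddGroup M] [Module R M] {T : M →L[R] M} {x : M} :
    x ∈ (1 - T).ker ↔ T x = x := by
  rw [LinearMap.mem_ker, coe_coe, sub_apply, one_apply_eq_self, sub_eq_zero, eq_comm]

theorem IsCompactOperator.finiteDimensional_ker_one_sub {𝕜 E : Type*} [NontriviallyNormedField 𝕜]
    [CompleteSpace 𝕜] [NormedAddCommGroup E] [NormedSpace 𝕜 E] {T : E →L[𝕜] E}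
    (hT : IsCompactOperator T) : FiniteDimensional 𝕜 (1 - T).ker := by
  have hfix (x) (hx : x ∈ (1 - T).ker) : T x = x := ContinuousLinearMap.mem_ker_one_sub_iff.1 hx
  have hK : ∀ x ∈ (1 - T).ker, T x ∈ (1 - T).ker := fun x hx => (hfix x hx).symm ▸ hx
  have hid : T.toLinearMap.restrict hK = LinearMap.id :=
    LinearMap.ext fun x => Subtype.ext (hfix x x.2)
  have := hT.restrict hK (1 - T).isClosed_ker
  rw [hid] at this
  exact .of_isCompactOperator_id this

section
variable {𝕜 E : Type*} [RCLike 𝕜] [NormedAddCommGroup E] [InnerProductSpace 𝕜 E] [CompleteSpace E]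

theorem IsCompactOperator.range_one_sub_eq_orthogonal_ker_of_isSymmetric {T : E →L[𝕜] E}
    (hT : IsCompactOperator T) (hsym : (T : E →ₗ[𝕜] E).IsSymmetric) :
    (1 - T).range = ((1 - T).ker)ᗮ := by
  set K := (1 - T).ker
  have hfix (x) (hx : x ∈ K) : T x = x := ContinuousLinearMap.mem_ker_one_sub_iff.1 hx
  have hsym' (x y : E) : ⟪T x, y⟫_𝕜 = ⟪x, T y⟫_𝕜 := hsym x y
  refine le_antisymm ?_ fun y hy => ?_
  · rintro _ ⟨x, rfl⟩
    refine (K.mem_orthogonal _).2 fun k hk => ?_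
    simp [inner_sub_right, ← hsym', hfix k hk]
  · have hV : ∀ v ∈ Kᗮ, T v ∈ Kᗮ := fun v hv => (K.mem_orthogonal _).2 fun k hk => by
      rw [← hsym', hfix k hk]; exact K.inner_right_of_mem_orthogonal hk hv
    set S := T.restrict hV
    have hS : IsCompactOperator S := hT.restrict hV (Submodule.isClosed_orthogonal K)
    obtain hμ | hμ := hS.hasEigenvalue_or_mem_resolventSet one_ne_zero
    · exfalso
      obtain ⟨v, hv⟩ := hμ.exists_hasEigenvector
      have hvK : (v : E) ∈ K := ContinuousLinearMap.mem_ker_one_sub_iff.2 <| by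
        simpa [S] using congrArg Subtype.val hv.apply_eq_smul
      exact hv.2 (Subtype.ext (Submodule.disjoint_def.1 K.orthogonal_disjoint _ hvK v.2))
    · rw [spectrum.mem_resolventSet_iff, map_one, ContinuousLinearMap.isUnit_iff_bijective] at hμ
      obtain ⟨x, hx⟩ := hμ.2 ⟨y, hy⟩
      exact ⟨x, congrArg Subtype.val hx⟩
end

namespace LinearPMap

variable {𝕜 E F : Type*} [RCLike 𝕜] [NormedAddCommGroup E] [InnerProductSpace 𝕜 E]
  [NormedAddCommGroup F] [InnerProductSpace 𝕜 F]

theorem IsFormalAdjoint.range_le_orthogonal_ker {A : E →ₗ.[𝕜] F} {B : F →ₗ.[𝕜] E}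
    (hAB : B.IsFormalAdjoint A) :
    LinearMap.range B.toFun ≤ ((LinearMap.ker A.toFun).map A.domain.subtype)ᗮ := by
  rintro _ ⟨y, rfl⟩
  refine (Submodule.mem_orthogonal _ _).2 ?_
  rintro _ ⟨u, hu : A u = 0, rfl⟩
  rw [inner_eq_zero_symm, Submodule.subtype_apply, toFun_eq_coe, hAB y u, hu, inner_zero_right]

/-- `(1 + B A) R = 1`, stated through the graphs of `A` and `B`. -/
def IsRightInverseOneAddComp (B : F →ₗ.[𝕜] E) (A : E →ₗ.[𝕜] F) (R : E →L[𝕜] E) : Prop :=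
  ∀ x, ∃ y z, (R x, y) ∈ A.graph ∧ (y, z) ∈ B.graph ∧ R x + z = x

namespace IsRightInverseOneAddComp

variable {A : E →ₗ.[𝕜] F} {B : F →ₗ.[𝕜] E} {R : E →L[𝕜] E}

theorem exists_inner_eq (hR : IsRightInverseOneAddComp B A R) (hAB : B.IsFormalAdjoint A)
    (b : E) : ∃ y, (R b, y) ∈ A.graph ∧
    ∀ u : A.domain, ⟪(u : E), b⟫_𝕜 = ⟪(u : E), R b⟫_𝕜 + ⟪A u, y⟫_𝕜 := by
  obtain ⟨y, z, hy, hz, hb⟩ := hR b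
  obtain ⟨w, rfl, rfl⟩ := (mem_graph_iff B).1 hz
  refine ⟨w, hy, fun u => ?_⟩
  conv_lhs => rw [← hb]
  rw [inner_add_right, ← hAB.symm u w]

theorem isSymmetric (hR : IsRightInverseOneAddComp B A R) (hAB : B.IsFormalAdjoint A) :
    (R : E →ₗ[𝕜] E).IsSymmetric := by
  choose y hyR hy using hR.exists_inner_eq hAB
  have key (a b : E) : ⟪R a, b⟫_𝕜 = ⟪R a, R b⟫_𝕜 + ⟪y a, y b⟫_𝕜 := by
    obtain ⟨u, hu : (u : E) = R a, hAu : A u = y a⟩ := (mem_graph_iff A).1 (hyR a)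
    simpa only [hu, hAu] using hy b u
  intro a b
  simp only [ContinuousLinearMap.coe_coe]
  rw [key, ← inner_conj_symm a, key b a, (starRingEnd 𝕜).map_add, inner_conj_symm, inner_conj_symm]

theorem ker_one_sub_eq (hR : IsRightInverseOneAddComp B A R) (hAB : B.IsFormalAdjoint A) :
    (1 - R).ker = (LinearMap.ker A.toFun).map A.domain.subtype := by
  refine le_antisymm (fun v hv => ?_) ?_
  · have hRv : R v = v := ContinuousLinearMap.mem_ker_one_sub_iff.1 hv
    obtain ⟨y, hyR, hy⟩ := hR.exists_inner_eq hAB v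
    obtain ⟨u, hu : (u : E) = R v, hAu : A u = y⟩ := (mem_graph_iff A).1 hyR
    have hy0 : y = 0 := by
      have := hy u
      rwa [hu, hRv, hAu, left_eq_add, inner_self_eq_zero] at this
    exact ⟨u, by simpa [hy0] using hAu, by simpa [hRv] using hu⟩
  · rintro _ ⟨u, hu : A u = 0, rfl⟩
    refine ContinuousLinearMap.mem_ker_one_sub_iff.2 (ext_inner_right 𝕜 fun b => ?_)
    obtain ⟨y, -, hy⟩ := hR.exists_inner_eq hAB b
    have hsym (x y : E) : ⟪R x, y⟫_𝕜 = ⟪x, R y⟫_𝕜 := hR.isSymmetric hAB x y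
    rw [Submodule.subtype_apply, hsym, hy u, hu, inner_zero_left, add_zero]

theorem range_one_sub_le (hR : IsRightInverseOneAddComp B A R) :
    (1 - R).range ≤ LinearMap.range B.toFun := by
  rintro _ ⟨x, rfl⟩
  obtain ⟨y, z, -, hz, hx⟩ := hR x
  obtain ⟨w, -, hw : B w = z⟩ := (mem_graph_iff B).1 hz
  exact ⟨w, by simpa [hw] using eq_sub_of_add_eq' hx⟩

theorem finiteDimensional_ker (hR : IsRightInverseOneAddComp B A R) (hAB : B.IsFormalAdjoint A)
    (hRc : IsCompactOperator R) : FiniteDimensional 𝕜 (LinearMap.ker A.toFun) := by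
  have := hRc.finiteDimensional_ker_one_sub
  rw [hR.ker_one_sub_eq hAB] at this
  exact (Submodule.equivMapOfInjective _ A.domain.injective_subtype _).symm.finiteDimensional

theorem range_eq_orthogonal_ker_one_sub [CompleteSpace E] (hR : IsRightInverseOneAddComp B A R)
    (hAB : B.IsFormalAdjoint A) (hRc : IsCompactOperator R) :
    LinearMap.range B.toFun = ((1 - R).ker)ᗮ := by
  refine le_antisymm ?_ ?_
  · rw [hR.ker_one_sub_eq hAB]
    exact hAB.range_le_orthogonal_ker
  · rw [← hRc.range_one_sub_eq_orthogonal_ker_of_isSymmetric (hR.isSymmetric hAB)]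
    exact hR.range_one_sub_le

end IsRightInverseOneAddComp

end LinearPMap

open LinearPMap

theorem fredholm_of_compact_resolvents_general {H₁ H₂ : Type*}
    [NormedAddCommGroup H₁] [InnerProductSpace ℂ H₁] [CompleteSpace H₁]
    [NormedAddCommGroup H₂] [InnerProductSpace ℂ H₂] [CompleteSpace H₂]
    (P : H₁ →ₗ.[ℂ] H₂)
    (hdense : Dense (P.domain : Set H₁))
    (R : H₁ →L[ℂ] H₁) (R' : H₂ →L[ℂ] H₂)
    (hRcpt : IsCompactOperator R) (hR'cpt : IsCompactOperator R')
    (hR : ∀ x : H₁, ∃ y : H₂, ∃ z : H₁,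
      (R x, y) ∈ P.graph ∧ (y, z) ∈ P.adjoint.graph ∧ R x + z = x)
    (hR' : ∀ w : H₂, ∃ y : H₁, ∃ z : H₂,
      (R' w, y) ∈ P.adjoint.graph ∧ (y, z) ∈ P.graph ∧ R' w + z = w) :
    FiniteDimensional ℂ (LinearMap.ker P.toFun) ∧
    FiniteDimensional ℂ (LinearMap.ker P.adjoint.toFun) ∧
    IsClosed (LinearMap.range P.toFun : Set H₂) := by
  have hadj : P†.IsFormalAdjoint P := adjoint_isFormalAdjoint hdense
  have hR : IsRightInverseOneAddComp P† P R := hR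
  have hR' : IsRightInverseOneAddComp P P† R' := hR'
  refine ⟨hR.finiteDimensional_ker hadj hRcpt, hR'.finiteDimensional_ker hadj.symm hR'cpt, ?_⟩
  rw [hR'.range_eq_orthogonal_ker_one_sub hadj.symm hR'cpt]
  exact Submodule.isClosed_orthogonal _

/-- A closed densely defined operator `P` between Hilbert spaces whose resolvent-type operators
`R = (1+P*P)⁻¹` and `R' = (1+PP*)⁻¹` are compact is Fredholm: `ker P` and `ker P*` are
finite-dimensional and the range of `P` is closed. The inverses are encoded via the graphs:
`R x ∈ dom P`, `P(Rx) ∈ dom P*` and `(1 + P*P)(Rx) = x`, and symmetrically for `R'`. -/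
theorem fredholm_of_compact_resolvents {H₁ H₂ : Type*}
    [NormedAddCommGroup H₁] [InnerProductSpace ℂ H₁] [CompleteSpace H₁]
    [NormedAddCommGroup H₂] [InnerProductSpace ℂ H₂] [CompleteSpace H₂]
    (P : H₁ →ₗ.[ℂ] H₂)
    (hdense : Dense (P.domain : Set H₁))
    (hclosed : IsClosed (P.graph : Set (H₁ × H₂)))
    (R : H₁ →L[ℂ] H₁) (R' : H₂ →L[ℂ] H₂)
    (hRcpt : IsCompactOperator R) (hR'cpt : IsCompactOperator R')
    (hR : ∀ x : H₁, ∃ y : H₂, ∃ z : H₁,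
      (R x, y) ∈ P.graph ∧ (y, z) ∈ P.adjoint.graph ∧ R x + z = x)
    (hR' : ∀ w : H₂, ∃ y : H₁, ∃ z : H₂,
      (R' w, y) ∈ P.adjoint.graph ∧ (y, z) ∈ P.graph ∧ R' w + z = w) :
    FiniteDimensional ℂ (LinearMap.ker P.toFun) ∧
    FiniteDimensional ℂ (LinearMap.ker P.adjoint.toFun) ∧
    IsClosed (LinearMap.range P.toFun : Set H₂) :=
  fredholm_of_compact_resolvents_general P hdense R R' hRcpt hR'cpt hR hR'
end
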